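/- arXiv:2001.08789 — 2 statements merged into one kernel-verified Lean document; each statement's English description precedes it below -/
import Mathlib

section
/- For m ∈ ℕ, m ≥ 1, let k_m(x) = exp(−x^{2m}) and let k̂_m be its (even) Fourier cosine density, so that k_m(t) = ∫₀^∞ k̂_m(s) cos(ts) ds. Then the first-moment-type coefficient r₁ = ∫₀^∞ s k̂_m(s) ds satisfies r₁ = (2/π) Γ((2m−1)/(2m)). -/
open Real MeasureTheory Set

open Filter Topology

namespace Stmt6Aux


lemma tendsto_exp_neg_mul (u : ℝ) (hu : 0 < u) :
    Tendsto (fun t : ℝ => Real.exp (-(u * t))) atTop (𝓝 0) := by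
  have h : Tendsto (fun t : ℝ => u * t) atTop atTop :=
    (tendsto_const_mul_atTop_of_pos hu).mpr tendsto_id
  exact Real.tendsto_exp_neg_atTop_nhds_zero.comp h

lemma integral_exp_neg_mul (u : ℝ) (hu : 0 < u) :
    ∫ t in Ioi (0:ℝ), Real.exp (-(u * t)) = 1 / u := by
  have := MeasureTheory.integral_comp_mul_left_Ioi (fun x => Real.exp (-x)) 0 hu
  simp only [mul_zero] at this
  rw [this, integral_exp_neg_Ioi_zero, smul_eq_mul, mul_one, one_div]

lemma integrableOn_exp_neg_mul (u : ℝ) (hu : 0 < u) :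
    IntegrableOn (fun t : ℝ => Real.exp (-(u * t))) (Ioi (0:ℝ)) := by
  simpa [neg_mul] using exp_neg_integrableOn_Ioi (0:ℝ) hu

lemma hasDerivAt_exp_neg_mul (u t : ℝ) :
    HasDerivAt (fun t => Real.exp (-(u * t))) (Real.exp (-(u * t)) * (-u)) t := by
  have h1 : HasDerivAt (fun t : ℝ => -(u * t)) (-u) t := by
    exact ((hasDerivAt_id' t).const_mul u).neg.congr_deriv (by ring)
  exact (Real.hasDerivAt_exp _).comp t h1

lemma integrableOn_cos_exp (u : ℝ) (hu : 0 < u) :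
    IntegrableOn (fun t : ℝ => Real.cos t * Real.exp (-(u * t))) (Ioi (0:ℝ)) := by
  refine (integrableOn_exp_neg_mul u hu).mono' ?_ ?_
  · exact (Real.continuous_cos.mul (by continuity)).aestronglyMeasurable
  · filter_upwards with t
    rw [norm_mul, Real.norm_eq_abs, Real.norm_eq_abs, Real.abs_exp]
    nlinarith [Real.abs_cos_le_one t, Real.exp_pos (-(u*t)), abs_nonneg (Real.cos t)]

lemma integral_cos_exp (u : ℝ) (hu : 0 < u) :
    ∫ t in Ioi (0:ℝ), Real.cos t * Real.exp (-(u * t)) = u / (1 + u^2) := by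
  set H : ℝ → ℝ := fun t => (Real.exp (-(u * t)) * (Real.sin t - u * Real.cos t)) / (1 + u^2)
    with hH
  have hu2 : (0:ℝ) < 1 + u^2 := by positivity
  have hderiv : ∀ t ∈ Ioi (0:ℝ), HasDerivAt H (Real.cos t * Real.exp (-(u * t))) t := by
    intro t _
    have h2 := hasDerivAt_exp_neg_mul u t
    have h3 : HasDerivAt (fun t => Real.sin t - u * Real.cos t)
        (Real.cos t + u * Real.sin t) t := by
      exact ((Real.hasDerivAt_sin t).sub ((Real.hasDerivAt_cos t).const_mul u)).congr_deriv (by ring)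
    have h4 := (h2.mul h3).div_const (1 + u^2)
    refine h4.congr_deriv ?_
    field_simp
    ring
  have hcont : ContinuousWithinAt H (Ici (0:ℝ)) 0 := by
    apply Continuous.continuousWithinAt
    continuity
  have htend : Tendsto H atTop (𝓝 0) := by
    apply squeeze_zero_norm (a := fun t => ((1 + u) / (1 + u^2)) * Real.exp (-(u * t)))
    · intro t
      rw [hH]
      rw [norm_div, norm_mul, Real.norm_eq_abs, Real.norm_eq_abs, Real.norm_eq_abs,
        Real.abs_exp, abs_of_pos hu2]
      rw [div_le_iff₀ hu2]
      have habs : |Real.sin t - u * Real.cos t| ≤ 1 + u := by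
        calc |Real.sin t - u * Real.cos t| ≤ |Real.sin t| + |u * Real.cos t| := abs_sub _ _
          _ ≤ 1 + u := by
              rw [abs_mul, abs_of_pos hu]
              have := Real.abs_sin_le_one t
              have := Real.abs_cos_le_one t
              nlinarith
      refine le_trans (mul_le_mul_of_nonneg_left habs (Real.exp_pos _).le) ?_
      rw [mul_right_comm, div_mul_cancel₀ _ hu2.ne', mul_comm]
    · simpa using (tendsto_exp_neg_mul u hu).const_mul ((1 + u) / (1 + u^2))
  have := integral_Ioi_of_hasDerivAt_of_tendsto hcont hderiv (integrableOn_cos_exp u hu) htend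
  rw [this, hH]
  simp only [mul_zero, neg_zero, Real.exp_zero, Real.sin_zero, Real.cos_zero, mul_one, one_mul,
    zero_sub, zero_div]
  rw [neg_div, neg_neg]

lemma hasDerivAt_G (t u : ℝ) (ht : 0 < t) :
    HasDerivAt (fun u => -((t*u + 1)/t^2 * Real.exp (-(t*u)))) (u * Real.exp (-(t*u))) u := by
  have h1 : HasDerivAt (fun u : ℝ => (t*u + 1)/t^2) (t/t^2) u := by
    simpa using (((hasDerivAt_id u).const_mul t).add_const 1).div_const (t^2)
  have h2 := hasDerivAt_exp_neg_mul t u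
  have h3 := (h1.mul h2).neg
  refine h3.congr_deriv ?_
  field_simp
  ring

lemma tendsto_G (t : ℝ) (ht : 0 < t) :
    Tendsto (fun u => -((t*u + 1)/t^2 * Real.exp (-(t*u)))) atTop (𝓝 0) := by
  have h0 : Tendsto (fun x : ℝ => (x + 1) * Real.exp (-x)) atTop (𝓝 0) := by
    have h1 : Tendsto (fun x : ℝ => x * Real.exp (-x)) atTop (𝓝 0) := by
      simpa using Real.tendsto_pow_mul_exp_neg_atTop_nhds_zero 1
    have h2 := h1.add Real.tendsto_exp_neg_atTop_nhds_zero
    simp only [add_zero] at h2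
    exact h2.congr (by intro x; ring)
  have h2 : Tendsto (fun u : ℝ => t * u) atTop atTop :=
    (tendsto_const_mul_atTop_of_pos ht).mpr tendsto_id
  have h3 := (h0.comp h2).const_mul (-(1/t^2))
  simp only [mul_zero] at h3
  apply h3.congr
  intro u
  simp only [Function.comp]
  field_simp

lemma integral_mul_exp_neg (t : ℝ) (ht : 0 < t) :
    ∫ u in Ioi (0:ℝ), u * Real.exp (-(t*u)) = 1/t^2 := by
  have hcont : ContinuousWithinAt (fun u => -((t*u + 1)/t^2 * Real.exp (-(t*u)))) (Ici (0:ℝ)) 0 :=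
    Continuous.continuousWithinAt (by continuity)
  have := integral_Ioi_of_hasDerivAt_of_nonneg hcont (fun u _ => hasDerivAt_G t u ht)
    (fun u hu => mul_nonneg (le_of_lt hu) (Real.exp_pos _).le) (tendsto_G t ht)
  rw [this]
  simp [mul_zero]

lemma integrableOn_mul_exp_neg (t : ℝ) (ht : 0 < t) :
    IntegrableOn (fun u : ℝ => u * Real.exp (-(t*u))) (Ioi (0:ℝ)) := by
  have hcont : ContinuousWithinAt (fun u => -((t*u + 1)/t^2 * Real.exp (-(t*u)))) (Ici (0:ℝ)) 0 :=
    Continuous.continuousWithinAt (by continuity)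
  exact integrableOn_Ioi_deriv_of_nonneg hcont (fun u _ => hasDerivAt_G t u ht)
    (fun u hu => mul_nonneg (le_of_lt hu) (Real.exp_pos _).le) (tendsto_G t ht)

section C
noncomputable def ff : ℝ → ℝ → ℝ := fun t u => (1 - Real.cos t) * (u * Real.exp (-(t*u)))

lemma ff_cont : Continuous (Function.uncurry ff) := by
  unfold ff Function.uncurry
  fun_prop

lemma ff_nonneg {t u : ℝ} (hu : 0 ≤ u) : 0 ≤ ff t u := by
  unfold ff
  have := Real.cos_le_one t
  exact mul_nonneg (by linarith) (mul_nonneg hu (Real.exp_pos _).le)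

lemma ff_integrable_t {u : ℝ} (hu : 0 < u) :
    IntegrableOn (fun t => ff t u) (Ioi (0:ℝ)) := by
  refine ((integrableOn_exp_neg_mul u hu).const_mul (2*u)).mono' ?_ ?_
  · exact (Continuous.aestronglyMeasurable (by unfold ff; continuity))
  · filter_upwards with t
    unfold ff
    rw [Real.norm_eq_abs, abs_mul, abs_mul, Real.abs_exp]
    have h1 : |1 - Real.cos t| ≤ 2 := by
      have := Real.cos_le_one t; have := Real.neg_one_le_cos t
      rw [abs_le]; constructor <;> linarith
    have h2 : |u| = u := abs_of_pos hu
    rw [h2, mul_comm t u]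
    nlinarith [mul_le_mul_of_nonneg_right h1 (mul_nonneg (le_of_lt hu) (Real.exp_pos (-(u*t))).le)]

lemma ff_integral_t {u : ℝ} (hu : 0 < u) :
    ∫ t in Ioi (0:ℝ), ff t u = (1 + u^2)⁻¹ := by
  have h1 : IntegrableOn (fun t => u * Real.exp (-(u*t))) (Ioi (0:ℝ)) :=
    (integrableOn_exp_neg_mul u hu).const_mul u
  have h2 : IntegrableOn (fun t => u * (Real.cos t * Real.exp (-(u*t)))) (Ioi (0:ℝ)) :=
    (integrableOn_cos_exp u hu).const_mul u
  have heq : ∀ t : ℝ, ff t u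
      = u * Real.exp (-(u*t)) - u * (Real.cos t * Real.exp (-(u*t))) := by
    intro t; unfold ff; rw [mul_comm t u]; ring
  rw [show (fun t => ff t u) = fun t => u * Real.exp (-(u*t)) - u * (Real.cos t * Real.exp (-(u*t)))
    from funext heq]
  rw [integral_sub h1 h2, integral_const_mul, integral_const_mul,
    integral_exp_neg_mul u hu, integral_cos_exp u hu]
  field_simp
  ring

lemma ff_prod_integrable :
    Integrable (Function.uncurry ff)
      ((volume.restrict (Ioi (0:ℝ))).prod (volume.restrict (Ioi (0:ℝ)))) := by
  rw [integrable_prod_iff' ff_cont.aestronglyMeasurable]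
  constructor
  · rw [ae_restrict_iff' measurableSet_Ioi]
    filter_upwards with u hu
    exact ff_integrable_t hu
  · have key : ∀ u ∈ Ioi (0:ℝ),
        (∫ t in Ioi (0:ℝ), ‖Function.uncurry ff (t, u)‖) = (1 + u^2)⁻¹ := by
      intro u hu
      rw [show (fun t => ‖Function.uncurry ff (t, u)‖) = fun t => ‖ff t u‖ from rfl]
      rw [setIntegral_congr_fun measurableSet_Ioi
        (fun t ht => Real.norm_of_nonneg (ff_nonneg (le_of_lt hu)))]
      exact ff_integral_t hu
    refine (integrable_inv_one_add_sq.integrableOn (s := Ioi (0:ℝ))).congr ?_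
    rw [EventuallyEq, ae_restrict_iff' measurableSet_Ioi]
    filter_upwards with u hu
    exact (key u hu).symm

lemma integral_one_sub_cos : ∫ t in Ioi (0:ℝ), (1 - Real.cos t)/t^2 = π/2 := by
  have hswap := integral_integral_swap ff_prod_integrable
  have hL : ∫ t in Ioi (0:ℝ), ∫ u in Ioi (0:ℝ), ff t u
      = ∫ t in Ioi (0:ℝ), (1 - Real.cos t)/t^2 := by
    refine setIntegral_congr_fun measurableSet_Ioi (fun t ht => ?_)
    have : ∫ u in Ioi (0:ℝ), ff t u = (1 - Real.cos t) * (1/t^2) := by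
      unfold ff
      rw [integral_const_mul, integral_mul_exp_neg t ht]
    rw [this]; ring
  have hR : ∫ u in Ioi (0:ℝ), ∫ t in Ioi (0:ℝ), ff t u = π/2 := by
    rw [setIntegral_congr_fun measurableSet_Ioi (fun u hu => ff_integral_t hu)]
    rw [integral_Ioi_inv_one_add_sq]
    simp
  rw [← hL, hswap, hR]

lemma integrableOn_one_sub_cos :
    IntegrableOn (fun t => (1 - Real.cos t)/t^2) (Ioi (0:ℝ)) := by
  have h := ff_prod_integrable.integral_prod_left
  refine h.congr ?_
  rw [EventuallyEq, ae_restrict_iff' measurableSet_Ioi]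
  filter_upwards with t ht
  have : ∫ u in Ioi (0:ℝ), ff t u = (1 - Real.cos t) * (1/t^2) := by
    unfold ff
    rw [integral_const_mul, integral_mul_exp_neg t ht]
  rw [show (fun u => Function.uncurry ff (t, u)) = fun u => ff t u from rfl, this]
  ring
end C

section L2
lemma integrableOn_gscaled {s : ℝ} (hs : 0 < s) :
    IntegrableOn (fun t => (1 - Real.cos (t*s))/t^2) (Ioi (0:ℝ)) := by
  have h : IntegrableOn (fun x => s^2 * ((1 - Real.cos x)/x^2)) (Ioi (s*0)) := by
    rw [mul_zero]
    exact integrableOn_one_sub_cos.const_mul _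
  have h2 := (integrableOn_Ioi_comp_mul_left_iff
    (fun x => s^2 * ((1 - Real.cos x)/x^2)) 0 hs).2 h
  refine h2.congr_fun (fun t ht => ?_) measurableSet_Ioi
  have ht' : (0:ℝ) < t := ht
  beta_reduce
  rw [mul_comm s t]
  field_simp

lemma integral_one_sub_cos_scaled {s : ℝ} (hs : 0 < s) :
    ∫ t in Ioi (0:ℝ), (1 - Real.cos (t*s))/t^2 = π/2 * s := by
  have key := MeasureTheory.integral_comp_mul_left_Ioi
    (fun x => s^2 * ((1 - Real.cos x)/x^2)) 0 hs
  rw [mul_zero] at key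
  have hL : ∫ t in Ioi (0:ℝ), (fun x => s^2 * ((1 - Real.cos x)/x^2)) (s * t)
      = ∫ t in Ioi (0:ℝ), (1 - Real.cos (t*s))/t^2 := by
    refine setIntegral_congr_fun measurableSet_Ioi (fun t ht => ?_)
    have ht' : (0:ℝ) < t := ht
    rw [mul_comm s t]
    field_simp
  rw [hL] at key
  rw [key, integral_const_mul, integral_one_sub_cos, smul_eq_mul]
  field_simp
end L2

section L4
variable {m : ℕ} (hm : 1 ≤ m)

lemma cast_sub2 (hm : 1 ≤ m) : ((2*m - 2 : ℕ) : ℝ) = 2*(m:ℝ) - 2 := by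
  have : (2:ℕ) ≤ 2*m := by omega
  push_cast [Nat.cast_sub this]
  ring

lemma hpart_eq (hm : 1 ≤ m) : ∀ t ∈ Ioi (0:ℝ),
    t ^ ((2*(m:ℝ)) - 2) * Real.exp (-t ^ ((2*m : ℕ):ℝ)) =
    t^(2*m - 2 : ℕ) * Real.exp (-t^(2*m)) := by
  intro t ht
  have ht' : (0:ℝ) < t := ht
  rw [← cast_sub2 hm, rpow_natCast, rpow_natCast]

lemma integrableOn_hpart (hm : 1 ≤ m) :
    IntegrableOn (fun t => t^(2*m - 2 : ℕ) * Real.exp (-t^(2*m))) (Ioi (0:ℝ)) := by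
  have hq : (-1:ℝ) < 2*(m:ℝ) - 2 := by
    have : (1:ℝ) ≤ (m:ℝ) := by exact_mod_cast hm
    linarith
  have hp : (1:ℝ) ≤ ((2*m : ℕ):ℝ) := by
    have : (1:ℕ) ≤ 2*m := by omega
    exact_mod_cast this
  have h := integrableOn_rpow_mul_exp_neg_rpow hq (zero_lt_one.trans_le hp)
  exact h.congr_fun (hpart_eq hm) measurableSet_Ioi

lemma integral_hpart (hm : 1 ≤ m) :
    ∫ t in Ioi (0:ℝ), t^(2*m - 2 : ℕ) * Real.exp (-t^(2*m))
      = (1/(2*(m:ℝ))) * Real.Gamma ((2*(m:ℝ) - 1)/(2*(m:ℝ))) := by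
  have hq : (-1:ℝ) < 2*(m:ℝ) - 2 := by
    have : (1:ℝ) ≤ (m:ℝ) := by exact_mod_cast hm
    linarith
  have hp : (0:ℝ) < ((2*m : ℕ):ℝ) := by
    have : (1:ℕ) ≤ 2*m := by omega
    exact_mod_cast Nat.lt_of_lt_of_le Nat.zero_lt_one this
  have h := integral_rpow_mul_exp_neg_rpow hp hq
  rw [setIntegral_congr_fun measurableSet_Ioi (hpart_eq hm)] at h
  rw [h]
  have hc : ((2*m : ℕ):ℝ) = 2*(m:ℝ) := by push_cast; ring
  rw [hc]
  ring_nf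
end L4

section L4b
lemma one_sub_exp_le (x : ℝ) : 1 - Real.exp (-x) ≤ x := by
  have := Real.add_one_le_exp (-x)
  linarith

lemma exp_le_one_of_nonneg {x : ℝ} (hx : 0 ≤ x) : Real.exp (-x) ≤ 1 := by
  rw [Real.exp_le_one_iff]
  linarith

lemma psi_meas (m : ℕ) :
    Measurable (fun t : ℝ => (1 - Real.exp (-t^(2*m)))/t^2) := by
  fun_prop

lemma psi_nonneg (m : ℕ) (t : ℝ) : 0 ≤ (1 - Real.exp (-t^(2*m)))/t^2 := by
  apply div_nonneg _ (sq_nonneg t)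
  have : Real.exp (-t^(2*m)) ≤ 1 := by
    apply exp_le_one_of_nonneg
    exact (even_two_mul m).pow_nonneg t
  linarith

lemma integrableOn_psi {m : ℕ} (hm : 1 ≤ m) :
    IntegrableOn (fun t : ℝ => (1 - Real.exp (-t^(2*m)))/t^2) (Ioi (0:ℝ)) := by
  have h1 : IntegrableOn (fun t : ℝ => (1 - Real.exp (-t^(2*m)))/t^2) (Ioc (0:ℝ) 1) := by
    refine Integrable.mono' (g := fun _ => (1:ℝ)) ?_ ((psi_meas m).aestronglyMeasurable) ?_
    · exact integrableOn_const measure_Ioc_lt_top.ne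
    · rw [ae_restrict_iff' measurableSet_Ioc]
      filter_upwards with t ht
      obtain ⟨ht0, ht1⟩ := ht
      rw [Real.norm_of_nonneg (psi_nonneg m t)]
      have hb : 1 - Real.exp (-t^(2*m)) ≤ t^(2*m) := one_sub_exp_le _
      have h2 : t^(2*m) ≤ t^2 := by
        apply pow_le_pow_of_le_one (le_of_lt ht0) ht1
        omega
      rw [div_le_one (by positivity)]
      linarith
  have h2 : IntegrableOn (fun t : ℝ => (1 - Real.exp (-t^(2*m)))/t^2) (Ioi (1:ℝ)) := by
    refine Integrable.mono' (g := fun t : ℝ => t ^ (-2 : ℝ)) ?_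
      ((psi_meas m).aestronglyMeasurable) ?_
    · exact integrableOn_Ioi_rpow_of_lt (by norm_num) one_pos
    · rw [ae_restrict_iff' measurableSet_Ioi]
      filter_upwards with t ht
      have ht' : (0:ℝ) < t := lt_trans one_pos ht
      rw [Real.norm_of_nonneg (psi_nonneg m t)]
      rw [Real.rpow_neg (le_of_lt ht'), show ((2:ℝ)) = ((2:ℕ):ℝ) by norm_num,
        Real.rpow_natCast]
      rw [div_le_iff₀ (by positivity), inv_mul_cancel₀ (by positivity)]
      have : Real.exp (-t^(2*m)) ≤ 1 := exp_le_one_of_nonneg (by positivity)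
      have : 0 < Real.exp (-t^(2*m)) := Real.exp_pos _
      linarith
  have := h1.union h2
  rwa [Ioc_union_Ioi_eq_Ioi zero_le_one] at this
end L4b

section L4c
variable {m : ℕ}

lemma hasDerivAt_F (hm : 1 ≤ m) {t : ℝ} (ht : 0 < t) :
    HasDerivAt (fun t : ℝ => (Real.exp (-t^(2*m)) - 1)/t)
      ((1 - Real.exp (-t^(2*m)))/t^2 - (2*m) * (t^(2*m - 2 : ℕ) * Real.exp (-t^(2*m)))) t := by
  have hpow : HasDerivAt (fun t : ℝ => t^(2*m)) ((2*m) * t^(2*m - 1)) t := by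
    simpa using hasDerivAt_pow (2*m) t
  have hexp : HasDerivAt (fun t : ℝ => Real.exp (-t^(2*m)))
      (Real.exp (-t^(2*m)) * (-((2*m) * t^(2*m - 1)))) t :=
    (Real.hasDerivAt_exp _).comp t hpow.neg
  have hnum := hexp.sub_const 1
  have hF := hnum.div (hasDerivAt_id' t) (ne_of_gt ht)
  refine hF.congr_deriv ?_
  symm
  have e1 : t^(2*m - 1) * t = t^(2*m) := by
    rw [← pow_succ]
    congr 1
    omega
  have e2 : t^(2*m - 2 : ℕ) * t^2 = t^(2*m) := by
    rw [← pow_add]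
    congr 1
    omega
  field_simp
  linear_combination (2*(m:ℝ) * Real.exp (-t^(2*m))) * e1 - (2*(m:ℝ) * Real.exp (-t^(2*m))) * e2

lemma contWithin_F (hm : 1 ≤ m) :
    ContinuousWithinAt (fun t : ℝ => (Real.exp (-t^(2*m)) - 1)/t) (Ici (0:ℝ)) 0 := by
  set G : ℝ → ℝ := fun t => Real.exp (-t^(2*m)) - 1 with hG
  have hd0 : HasDerivAt G 0 0 := by
    have hpow : HasDerivAt (fun t : ℝ => t^(2*m)) ((2*m) * (0:ℝ)^(2*m - 1)) 0 := by
      simpa using hasDerivAt_pow (2*m) (0:ℝ)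
    have hexp : HasDerivAt (fun t : ℝ => Real.exp (-t^(2*m)))
        (Real.exp (-(0:ℝ)^(2*m)) * (-((2*m) * (0:ℝ)^(2*m - 1)))) 0 :=
      (Real.hasDerivAt_exp _).comp 0 hpow.neg
    have := hexp.sub_const 1
    refine this.congr_deriv ?_
    rw [zero_pow (by omega : 2*m - 1 ≠ 0)]
    ring
  have hslope := hasDerivAt_iff_tendsto_slope.1 hd0
  have hF0 : (Real.exp (-(0:ℝ)^(2*m)) - 1)/(0:ℝ) = 0 := by
    rw [zero_pow (by omega : 2*m ≠ 0)]
    simp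
  rw [show Ici (0:ℝ) = insert 0 (Ioi 0) by rw [Set.Ioi_insert]]
  rw [continuousWithinAt_insert_self]
  show Filter.Tendsto _ (𝓝[Ioi (0:ℝ)] 0) (𝓝 ((Real.exp (-(0:ℝ)^(2*m)) - 1)/(0:ℝ)))
  rw [hF0]
  have hmono : 𝓝[Ioi (0:ℝ)] 0 ≤ 𝓝[≠] (0:ℝ) :=
    nhdsWithin_mono 0 (fun x hx => ne_of_gt hx)
  refine Tendsto.congr ?_ (hslope.mono_left hmono)
  intro t
  have hG0 : G 0 = 0 := by
    rw [hG]
    simp [zero_pow (show 2*m ≠ 0 by omega)]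
  rw [slope_def_field, hG0, sub_zero, sub_zero]

lemma tendsto_F (hm : 1 ≤ m) :
    Filter.Tendsto (fun t : ℝ => (Real.exp (-t^(2*m)) - 1)/t) atTop (𝓝 0) := by
  apply squeeze_zero_norm' (a := fun t : ℝ => 1/t)
  · filter_upwards [eventually_gt_atTop (0:ℝ)] with t ht
    rw [Real.norm_eq_abs, abs_div, abs_of_pos ht]
    have h1 : |Real.exp (-t^(2*m)) - 1| ≤ 1 := by
      have h2 : Real.exp (-t^(2*m)) ≤ 1 := exp_le_one_of_nonneg (by positivity)
      have h3 := Real.exp_pos (-t^(2*m))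
      rw [abs_le]
      constructor <;> linarith
    gcongr
  · simpa using tendsto_inv_atTop_zero.congr (fun x => (one_div x).symm)
end L4c

lemma integral_psi {m : ℕ} (hm : 1 ≤ m) :
    ∫ t in Ioi (0:ℝ), (1 - Real.exp (-t^(2*m)))/t^2
      = Real.Gamma ((2*(m:ℝ) - 1)/(2*(m:ℝ))) := by
  set f' : ℝ → ℝ := fun t =>
    (1 - Real.exp (-t^(2*m)))/t^2 - (2*m) * (t^(2*m - 2 : ℕ) * Real.exp (-t^(2*m))) with hf'
  have hpartint : IntegrableOn (fun t : ℝ => (2*m : ℝ) * (t^(2*m - 2 : ℕ) * Real.exp (-t^(2*m))))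
      (Ioi (0:ℝ)) := (integrableOn_hpart hm).const_mul _
  have hf'int : IntegrableOn f' (Ioi (0:ℝ)) := (integrableOn_psi hm).sub hpartint
  have hzero := integral_Ioi_of_hasDerivAt_of_tendsto (contWithin_F hm)
    (fun t ht => hasDerivAt_F hm ht) hf'int (tendsto_F hm)
  have hF0 : (Real.exp (-(0:ℝ)^(2*m)) - 1)/(0:ℝ) = 0 := by
    rw [zero_pow (by omega : 2*m ≠ 0)]
    simp
  rw [hF0, sub_zero] at hzero
  have hsplit : ∀ t : ℝ, (1 - Real.exp (-t^(2*m)))/t^2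
      = f' t + (2*m : ℝ) * (t^(2*m - 2 : ℕ) * Real.exp (-t^(2*m))) := by
    intro t
    rw [hf']
    ring
  rw [setIntegral_congr_fun measurableSet_Ioi (fun t _ => hsplit t),
    integral_add hf'int hpartint, hzero, integral_const_mul, integral_hpart hm, zero_add]
  have hmpos : (0:ℝ) < 2*(m:ℝ) := by
    have : (1:ℝ) ≤ (m:ℝ) := by exact_mod_cast hm
    linarith
  field_simp

end Stmt6Aux

open Stmt6Aux

/-- for `m ≥ 1`, if `k̂ₘ` is the Fourier cosine density of `kₘ(x) = exp(−x^{2m})`,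
i.e. `exp(−t^{2m}) = ∫₀^∞ k̂ₘ(s) cos(ts) ds` for all `t`, then
`∫₀^∞ s k̂ₘ(s) ds = (2/π) Γ((2m−1)/(2m))`. -/
theorem stmt6 (m : ℕ) (hm : 1 ≤ m) (khat : ℝ → ℝ)
    (hrep : ∀ t : ℝ, Real.exp (-t ^ (2 * m)) = ∫ s in Ioi (0 : ℝ), khat s * Real.cos (t * s))
    (hint : IntegrableOn (fun s => s * khat s) (Ioi (0 : ℝ))) :
    (∫ s in Ioi (0 : ℝ), s * khat s)
      = (2 / π) * Real.Gamma ((2 * (m : ℝ) - 1) / (2 * (m : ℝ))) := by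
  have hmeas : AEStronglyMeasurable khat (volume.restrict (Ioi (0:ℝ))) := by
    have h1 := hint.aestronglyMeasurable
    have h2 : (fun s : ℝ => s⁻¹ * (s * khat s)) =ᵐ[volume.restrict (Ioi (0:ℝ))] khat := by
      rw [EventuallyEq, ae_restrict_iff' measurableSet_Ioi]
      filter_upwards with s hs
      have : s ≠ 0 := ne_of_gt hs
      field_simp
    exact ((measurable_inv.aestronglyMeasurable).mul h1).congr h2
  have hrep0 := hrep 0
  have h0simp : Real.exp (-(0:ℝ)^(2*m)) = 1 := by
    rw [zero_pow (by omega : 2*m ≠ 0)]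
    simp
  rw [h0simp] at hrep0
  simp only [zero_mul, Real.cos_zero, mul_one] at hrep0
  have hkint : IntegrableOn khat (Ioi (0:ℝ)) := by
    by_contra h
    rw [integral_undef h] at hrep0
    norm_num at hrep0
  have hkcint : ∀ t : ℝ, IntegrableOn (fun s => khat s * Real.cos (t*s)) (Ioi (0:ℝ)) := by
    intro t
    by_contra h
    have h2 := hrep t
    rw [integral_undef h] at h2
    exact (Real.exp_pos _).ne' h2
  have hdiff : ∀ t : ℝ, ∫ s in Ioi (0:ℝ), khat s * (1 - Real.cos (t*s))
      = 1 - Real.exp (-t^(2*m)) := by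
    intro t
    have he : (fun s => khat s * (1 - Real.cos (t*s)))
        = fun s => khat s - khat s * Real.cos (t*s) := by
      funext s
      ring
    rw [he, integral_sub hkint (hkcint t), ← hrep0, ← hrep t]
  set K : ℝ → ℝ → ℝ := fun t s => khat s * (1 - Real.cos (t*s)) / t^2 with hKdef
  have hKmeas : AEStronglyMeasurable (Function.uncurry K)
      ((volume.restrict (Ioi (0:ℝ))).prod (volume.restrict (Ioi (0:ℝ)))) := by
    have h1 : AEStronglyMeasurable (fun p : ℝ × ℝ => khat p.2)
        ((volume.restrict (Ioi (0:ℝ))).prod (volume.restrict (Ioi (0:ℝ)))) := hmeas.comp_snd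
    have h2 : Measurable (fun p : ℝ × ℝ => (1 - Real.cos (p.1 * p.2)) / p.1^2) := by
      fun_prop
    have h3 := h1.mul h2.aestronglyMeasurable
    refine h3.congr (Filter.Eventually.of_forall (fun p => ?_))
    show khat p.2 * ((1 - Real.cos (p.1 * p.2)) / p.1^2) = K p.1 p.2
    simp only [hKdef]
    ring
  have cond1 : ∀ᵐ s ∂(volume.restrict (Ioi (0:ℝ))),
      Integrable (fun t => K t s) (volume.restrict (Ioi (0:ℝ))) := by
    rw [ae_restrict_iff' measurableSet_Ioi]
    filter_upwards with s hs
    refine ((integrableOn_gscaled hs).const_mul (khat s)).congr ?_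
    refine Filter.Eventually.of_forall (fun t => ?_)
    simp only [hKdef]
    ring
  have hnormval : ∀ s ∈ Ioi (0:ℝ),
      (∫ t in Ioi (0:ℝ), ‖K t s‖) = |khat s| * (π/2 * s) := by
    intro s hs
    have he : ∀ t ∈ Ioi (0:ℝ), ‖K t s‖ = |khat s| * ((1 - Real.cos (t*s))/t^2) := by
      intro t ht
      simp only [hKdef]
      have hnn : 0 ≤ (1 - Real.cos (t*s))/t^2 :=
        div_nonneg (by have := Real.cos_le_one (t*s); linarith) (sq_nonneg t)
      rw [Real.norm_eq_abs, mul_div_assoc, abs_mul, abs_of_nonneg hnn]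
    rw [setIntegral_congr_fun measurableSet_Ioi he, integral_const_mul,
      integral_one_sub_cos_scaled hs]
  have cond2 : Integrable (fun s => ∫ t in Ioi (0:ℝ), ‖K t s‖)
      (volume.restrict (Ioi (0:ℝ))) := by
    refine (hint.norm.const_mul (π/2)).congr ?_
    rw [EventuallyEq, ae_restrict_iff' measurableSet_Ioi]
    filter_upwards with s hs
    rw [hnormval s hs, Real.norm_eq_abs, abs_mul, abs_of_pos hs]
    ring
  have hKint : Integrable (Function.uncurry K)
      ((volume.restrict (Ioi (0:ℝ))).prod (volume.restrict (Ioi (0:ℝ)))) := by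
    rw [integrable_prod_iff' hKmeas]
    exact ⟨cond1, cond2⟩
  have hswap := integral_integral_swap hKint
  have hL : (∫ t in Ioi (0:ℝ), ∫ s in Ioi (0:ℝ), K t s)
      = Real.Gamma ((2*(m:ℝ) - 1)/(2*(m:ℝ))) := by
    rw [← integral_psi hm]
    refine setIntegral_congr_fun measurableSet_Ioi (fun t ht => ?_)
    have he : ∀ s : ℝ, K t s = khat s * (1 - Real.cos (t*s)) * (t^2)⁻¹ := by
      intro s
      simp only [hKdef]
      ring
    rw [show (fun s => K t s) = fun s => khat s * (1 - Real.cos (t*s)) * (t^2)⁻¹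
      from funext he]
    rw [integral_mul_const, hdiff t, div_eq_mul_inv]
  have hR : (∫ s in Ioi (0:ℝ), ∫ t in Ioi (0:ℝ), K t s)
      = π/2 * ∫ s in Ioi (0:ℝ), s * khat s := by
    have hinner : ∀ s ∈ Ioi (0:ℝ),
        (∫ t in Ioi (0:ℝ), K t s) = π/2 * (s * khat s) := by
      intro s hs
      have he : ∀ t : ℝ, K t s = khat s * ((1 - Real.cos (t*s))/t^2) := by
        intro t
        simp only [hKdef]
        ring
      rw [show (fun t => K t s) = fun t => khat s * ((1 - Real.cos (t*s))/t^2)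
        from funext he]
      rw [integral_const_mul, integral_one_sub_cos_scaled hs]
      ring
    rw [setIntegral_congr_fun measurableSet_Ioi hinner, integral_const_mul]
  have hfinal : Real.Gamma ((2*(m:ℝ) - 1)/(2*(m:ℝ)))
      = π/2 * ∫ s in Ioi (0:ℝ), s * khat s := by
    rw [← hL, hswap, hR]
  rw [hfinal]
  have hπ : (π:ℝ) ≠ 0 := Real.pi_ne_zero
  field_simp
end

section
/- Let L be a linear operator on smooth functions and consider sequences of time-dependent functions (S_i), (D_i) satisfying: ∂_t S₀ = L D₀, ∂_t D₀ = L S₀, and for i ≥ 0, ∂_t S_{i+1} = L D_{i+1} − ½ □ D_i, ∂_t D_{i+1} = L S_{i+1} − ½ □ S_i, with initial values D₀(0,·) = 0, S_{i+1}(0,·) = 0, and D_{i+1}(0,·) = −∂_t S_i(0,·), where □ = ∂_t² − Δ for a fixed time-independent operator Δ commuting with L only through the given relations. Assume L commutes with ∂_t. Then for all i, n ∈ ℕ₀, ∂_t^{2n} D_i(0,·) = 0. -/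
open Filter
open scoped ContDiff

section helpers
variable {F : Type*} [NormedAddCommGroup F] [NormedSpace ℝ F]

private lemma iter_smooth {f : ℝ → F} (hf : ContDiff ℝ ∞ f) (n : ℕ) :
    ContDiff ℝ ∞ (iteratedDeriv n f) := by
  rw [iteratedDeriv_eq_iterate]; exact hf.iterate_deriv n

private lemma clm_iter (L : F →L[ℝ] F) {f : ℝ → F} (hf : ContDiff ℝ ∞ f) (n : ℕ) :
    iteratedDeriv n (fun t => L (f t)) = fun t => L (iteratedDeriv n f t) := by
  induction n with
  | zero => simp
  | succ n ih =>
    rw [iteratedDeriv_succ, ih, iteratedDeriv_succ]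
    funext t
    have hd : DifferentiableAt ℝ (iteratedDeriv n f) t :=
      ((iter_smooth hf n).differentiable (by simp)).differentiableAt
    exact (L.hasFDerivAt.comp_hasDerivAt t hd.hasDerivAt).deriv

private lemma iter_sub {f g : ℝ → F} (hf : ContDiff ℝ ∞ f) (hg : ContDiff ℝ ∞ g)
    (n : ℕ) (x : ℝ) :
    iteratedDeriv n (fun t => f t - g t) x = iteratedDeriv n f x - iteratedDeriv n g x := by
  simp_rw [← iteratedDerivWithin_univ]
  exact iteratedDerivWithin_sub (Set.mem_univ x) uniqueDiffOn_univ
    (hf.contDiffWithinAt.of_le (WithTop.coe_le_coe.mpr le_top))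
    (hg.contDiffWithinAt.of_le (WithTop.coe_le_coe.mpr le_top))

private lemma iter_smul {f : ℝ → F} (hf : ContDiff ℝ ∞ f) (c : ℝ) (n : ℕ) (x : ℝ) :
    iteratedDeriv n (fun t => c • f t) x = c • iteratedDeriv n f x := by
  simp_rw [← iteratedDerivWithin_univ]
  exact iteratedDerivWithin_const_smul (Set.mem_univ x) uniqueDiffOn_univ c
    (hf.contDiffWithinAt.of_le (WithTop.coe_le_coe.mpr le_top))

private lemma iter_shift (f : ℝ → F) (n : ℕ) :
    iteratedDeriv n (iteratedDeriv 2 f) = iteratedDeriv (n + 2) f := by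
  simp only [iteratedDeriv_eq_iterate, Function.iterate_add_apply]

private lemma key0 (L : F →L[ℝ] F) {X Y : ℝ → F} (hY : ContDiff ℝ ∞ Y)
    (hrec : ∀ t, deriv X t = L (Y t)) (k : ℕ) (hY0 : iteratedDeriv k Y 0 = 0) :
    iteratedDeriv (k + 1) X 0 = 0 := by
  rw [iteratedDeriv_succ', funext hrec, clm_iter L hY k]
  simp [hY0]

private lemma key (L Δ : F →L[ℝ] F) {X Y Z : ℝ → F} (hY : ContDiff ℝ ∞ Y)
    (hZ : ContDiff ℝ ∞ Z)
    (hrec : ∀ t, deriv X t = L (Y t) - (1 / 2 : ℝ) • (iteratedDeriv 2 Z t - Δ (Z t)))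
    (k : ℕ) (hY0 : iteratedDeriv k Y 0 = 0) (hZ2 : iteratedDeriv (k + 2) Z 0 = 0)
    (hZ0 : iteratedDeriv k Z 0 = 0) :
    iteratedDeriv (k + 1) X 0 = 0 := by
  have hLY : ContDiff ℝ ∞ (fun t => L (Y t)) := L.contDiff.comp hY
  have hin : ContDiff ℝ ∞ (fun t => iteratedDeriv 2 Z t - Δ (Z t)) :=
    (iter_smooth hZ 2).sub (Δ.contDiff.comp hZ)
  have hsm : ContDiff ℝ ∞ (fun t => (1 / 2 : ℝ) • (iteratedDeriv 2 Z t - Δ (Z t))) :=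
    hin.const_smul _
  rw [iteratedDeriv_succ', funext hrec, iter_sub hLY hsm, clm_iter L hY,
    iter_smul hin, iter_sub (g := fun t => Δ (Z t)) (iter_smooth hZ 2) (Δ.contDiff.comp hZ),
    iter_shift, clm_iter Δ hZ]
  simp [hY0, hZ2, hZ0]

end helpers


/-- transport hierarchy: with `□ w = ∂_t² w − Δ w`, suppose
`∂_t S₀ = L D₀`, `∂_t D₀ = L S₀`, `∂_t S_{i+1} = L D_{i+1} − ½ □ D_i`,
`∂_t D_{i+1} = L S_{i+1} − ½ □ S_i`, with initial values `D₀(0) = 0`, `S_{i+1}(0) = 0`,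
`D_{i+1}(0) = −∂_t S_i(0)`.  Then `∂_t^{2n} D_i(0) = 0` for all `i, n`.
(`L` is a fixed time-independent operator, so it commutes with `∂_t`; all `S_i, D_i` are
smooth in `t`.) -/
theorem stmt11 {F : Type*} [NormedAddCommGroup F] [NormedSpace ℝ F]
    (L Δ : F →L[ℝ] F)
    (S D : ℕ → ℝ → F)
    (hSsmooth : ∀ i, ContDiff ℝ (⊤ : ℕ∞) (S i)) (hDsmooth : ∀ i, ContDiff ℝ (⊤ : ℕ∞) (D i))
    (hS0 : ∀ t, deriv (S 0) t = L (D 0 t))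
    (hD0 : ∀ t, deriv (D 0) t = L (S 0 t))
    (hSrec : ∀ i t, deriv (S (i + 1)) t
      = L (D (i + 1) t) - (1 / 2 : ℝ) • (iteratedDeriv 2 (D i) t - Δ (D i t)))
    (hDrec : ∀ i t, deriv (D (i + 1)) t
      = L (S (i + 1) t) - (1 / 2 : ℝ) • (iteratedDeriv 2 (S i) t - Δ (S i t)))
    (hD0iv : D 0 0 = 0)
    (hSiv : ∀ i, S (i + 1) 0 = 0)
    (hDiv : ∀ i, D (i + 1) 0 = -deriv (S i) 0) :
    ∀ i n : ℕ, iteratedDeriv (2 * n) (D i) 0 = 0 := by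
  have hS : ∀ i, ContDiff ℝ ∞ (S i) := fun i => (hSsmooth i).of_le (by simp)
  have hD : ∀ i, ContDiff ℝ ∞ (D i) := fun i => (hDsmooth i).of_le (by simp)
  suffices H : ∀ i n : ℕ,
      iteratedDeriv (2 * n) (D i) 0 = 0 ∧ iteratedDeriv (2 * n + 1) (S i) 0 = 0 by
    exact fun i n => (H i n).1
  intro i
  induction i with
  | zero =>
    intro n
    induction n with
    | zero =>
      refine ⟨by simpa using hD0iv, ?_⟩
      exact key0 L (hD 0) hS0 0 (by simpa using hD0iv)
    | succ n ihn =>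
      have hDp : iteratedDeriv (2 * (n + 1)) (D 0) 0 = 0 := by
        have e : 2 * (n + 1) = 2 * n + 1 + 1 := by ring
        rw [e]
        exact key0 L (hS 0) hD0 _ ihn.2
      refine ⟨hDp, ?_⟩
      exact key0 L (hD 0) hS0 _ hDp
  | succ i ih =>
    intro n
    induction n with
    | zero =>
      have hD1 : D (i + 1) 0 = 0 := by
        have h1 := (ih 0).2
        rw [show 2 * 0 + 1 = 1 from rfl, iteratedDeriv_one] at h1
        rw [hDiv i, h1, neg_zero]
      refine ⟨by simpa using hD1, ?_⟩
      have := key (L := L) (Δ := Δ) (hY := hD (i + 1)) (hZ := hD i)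
        (hrec := hSrec i) (k := 0) (hY0 := by simpa using hD1)
        (hZ2 := by simpa using (ih 1).1) (hZ0 := by simpa using (ih 0).1)
      simpa using this
    | succ n ihn =>
      have hDp : iteratedDeriv (2 * (n + 1)) (D (i + 1)) 0 = 0 := by
        have e : 2 * (n + 1) = 2 * n + 1 + 1 := by ring
        rw [e]
        exact key L Δ (hS (i + 1)) (hS i) (hDrec i) _ ihn.2
          (by have := (ih (n + 1)).2; rwa [show 2*(n+1)+1 = 2*n+1+2 by ring] at this)
          (ih n).2
      refine ⟨hDp, ?_⟩
      have e : 2 * (n + 1) + 1 = (2 * n + 2) + 1 := by ring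
      rw [e]
      exact key L Δ (hD (i + 1)) (hD i) (hSrec i) _
        (by rwa [show 2*n+2 = 2*(n+1) by ring])
        (by have := (ih (n + 2)).1; rwa [show 2*(n+2) = 2*n+2+2 by ring] at this)
        (by have := (ih (n + 1)).1; rwa [show 2*(n+1) = 2*n+2 by ring] at this)
end
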